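/- arXiv:0901.2428 — 3 statements merged into one kernel-verified Lean document; each statement's English description precedes it below -/
import Mathlib

section
/- Let X be a set and let u, v, g, h be bijections of X. Suppose D ⊆ X is a set such that u and v fix every point outside D (i.e., supp(u) ⊆ D and supp(v) ⊆ D), and the three sets D, g(D), h(D) are pairwise disjoint. Then [u, v] = [[u, g], [v, h]], where [x, y] = x y x⁻¹ y⁻¹. -/
/-!
Write `⁅u, g⁆ = u * x` with `x = g * u⁻¹ * g⁻¹`, which moves only points of `g '' D`, and likewise
`⁅v, h⁆ = v * y` with `y` moving only points of `h '' D`. Permutations moving points of disjoint sets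
commute, so `x` commutes with `v` and `y`, and `y` with `u`; these factors then cancel out of
`⁅u * x, v * y⁆`, leaving `⁅u, v⁆`.
-/

open scoped commutatorElement

theorem commutatorElement_mul_mul_of_commute {G : Type*} [Group G] {a b c d : G}
    (hcd : Commute c d) (hcb : Commute c b) (hda : Commute d a) :
    ⁅a * c, b * d⁆ = ⁅a, b⁆ :=
  calc ⁅a * c, b * d⁆ = a * (c * (b * d) * c⁻¹) * a⁻¹ * d⁻¹ * b⁻¹ := by
        simp only [commutatorElement_def, mul_inv_rev, mul_assoc]
    _ = a * b * (d * a⁻¹ * d⁻¹) * b⁻¹ := by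
        rw [(hcb.mul_right hcd).eq, mul_inv_cancel_right]
        simp only [mul_assoc]
    _ = ⁅a, b⁆ := by
        rw [hda.inv_right.eq, mul_inv_cancel_right, commutatorElement_def]

theorem commutatorElement_eq_mul_conj_inv {G : Type*} [Group G] (a g : G) :
    ⁅a, g⁆ = a * (g * a⁻¹ * g⁻¹) := by
  simp only [commutatorElement_def, mul_assoc]

namespace Equiv.Perm

variable {X : Type*}

theorem movedBy_inv (p : Perm X) : {x | p⁻¹ x ≠ x} = {x | p x ≠ x} := by
  ext x
  exact not_congr (inv_eq_iff_eq.trans eq_comm)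

theorem movedBy_conj (g p : Perm X) : {x | (g * p * g⁻¹) x ≠ x} = g '' {x | p x ≠ x} := by
  ext x
  rw [Equiv.image_eq_preimage_symm]
  simp only [Set.mem_ofPred_eq, Set.mem_preimage, mul_apply, ne_eq, ← eq_inv_iff_eq]
  rfl

theorem disjoint_of_movedBy_subset {p q : Perm X} {A B : Set X}
    (hp : {x | p x ≠ x} ⊆ A) (hq : {x | q x ≠ x} ⊆ B) (hAB : _root_.Disjoint A B) :
    p.Disjoint q :=
  fun _ => or_iff_not_and_not.mpr fun hx => Set.disjoint_left.mp hAB (hp hx.1) (hq hx.2)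

theorem movedBy_conj_inv_subset {p : Perm X} {A : Set X} (hp : {x | p x ≠ x} ⊆ A) (g : Perm X) :
    {x | (g * p⁻¹ * g⁻¹) x ≠ x} ⊆ g '' A := by
  rw [movedBy_conj, movedBy_inv]
  exact Set.image_mono hp

end Equiv.Perm

open Equiv.Perm in
theorem stmt4 {X : Type*} (u v g h : Equiv.Perm X) (D : Set X)
    (hu : {x : X | u x ≠ x} ⊆ D) (hv : {x : X | v x ≠ x} ⊆ D)
    (hDg : Disjoint D (g '' D)) (hDh : Disjoint D (h '' D))
    (hgh : Disjoint (g '' D) (h '' D)) :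
    u * v * u⁻¹ * v⁻¹ =
      ((u * g * u⁻¹ * g⁻¹) * (v * h * v⁻¹ * h⁻¹) *
        (u * g * u⁻¹ * g⁻¹)⁻¹ * (v * h * v⁻¹ * h⁻¹)⁻¹) := by
  have hx := movedBy_conj_inv_subset hu g
  have hy := movedBy_conj_inv_subset hv h
  simp only [← commutatorElement_def]
  rw [commutatorElement_eq_mul_conj_inv u g, commutatorElement_eq_mul_conj_inv v h]
  exact (commutatorElement_mul_mul_of_commute
    (disjoint_of_movedBy_subset hx hy hgh).commute
    (disjoint_of_movedBy_subset hx hv hDg.symm).commute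
    (disjoint_of_movedBy_subset hy hu hDh.symm).commute).symm
end

section
/- Let X be a set, G a group of permutations of X, and N a normal subgroup of G containing some element g. Suppose there exist h ∈ G and a subset D ⊆ X such that D, g(D), h(D) are pairwise disjoint. Then for every pair u, v ∈ G with supp(u) ⊆ D and supp(v) ⊆ D, the commutator [u, v] belongs to N. -/
/-!
Thurston's trick. Put `u' = g u g⁻¹` and `v' = h v h⁻¹`. Their supports lie in `g(D)` and `h(D)`,
so by disjointness `u'` commutes with `v` and `v'`, and `u` commutes with `v'`; expanding then
gives `[u, v] = [[u, g], [v, h]]`. Since `g ∈ N` and `N` is normal, `[u, g] ∈ N`, hence also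
`[[u, g], [v, h]] ∈ N`.
-/

open scoped commutatorElement

section Group

variable {G : Type*} [Group G]

theorem commutatorElement_mul_mul_of_commute_s5 {u v a b : G} (hav : Commute a v)
    (hab : Commute a b) (hub : Commute u b) : ⁅u * a, v * b⁆ = ⁅u, v⁆ := by
  calc ⁅u * a, v * b⁆ = u * (a * v) * b * a⁻¹ * u⁻¹ * b⁻¹ * v⁻¹ := by group
    _ = u * v * (a * b) * a⁻¹ * u⁻¹ * b⁻¹ * v⁻¹ := by rw [hav.eq]; group
    _ = u * v * (b * u⁻¹) * b⁻¹ * v⁻¹ := by rw [hab.eq]; group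
    _ = ⁅u, v⁆ := by rw [← hub.inv_left.eq]; group

theorem commutatorElement_commutatorElement_eq_of_commute {u v g h : G}
    (hv : Commute (g * u * g⁻¹) v) (hgh : Commute (g * u * g⁻¹) (h * v * h⁻¹))
    (hu : Commute u (h * v * h⁻¹)) : ⁅⁅u, g⁆, ⁅v, h⁆⁆ = ⁅u, v⁆ := by
  have hconj (x y : G) : ⁅x, y⁆ = x * (y * x * y⁻¹)⁻¹ := by group
  rw [hconj u g, hconj v h]
  exact commutatorElement_mul_mul_of_commute_s5 hv.inv_left hgh.inv_left.inv_right hu.inv_right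

theorem Subgroup.Normal.commutatorElement_commutatorElement_mem {N : Subgroup G} (hN : N.Normal)
    {g : G} (hg : g ∈ N) (u w : G) : ⁅⁅u, g⁆, w⁆ ∈ N :=
  commutator_le_left N ⊤ <| commutator_mem_commutator
    (commutator_le_right ⊤ N <| commutator_mem_commutator (mem_top u) hg) (mem_top w)

end Group

namespace Equiv.Perm

variable {X : Type*}

theorem commute_of_disjoint_of_subset {σ τ : Perm X} {A B : Set X} (hAB : _root_.Disjoint A B)
    (hσ : {x | σ x ≠ x} ⊆ A) (hτ : {x | τ x ≠ x} ⊆ B) : Commute σ τ :=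
  Disjoint.commute fun x => by
    by_contra! hx
    exact Set.disjoint_left.mp hAB (hσ hx.1) (hτ hx.2)

theorem setOf_conj_apply_ne_subset_image {σ : Perm X} {A : Set X} (hσ : {x | σ x ≠ x} ⊆ A)
    (k : Perm X) : {x | (k * σ * k⁻¹) x ≠ x} ⊆ k '' A := by
  intro x hx
  refine ⟨k⁻¹ x, hσ fun hfix => hx ?_, by simp⟩
  rw [Perm.mul_apply, Perm.mul_apply, hfix]
  exact k.apply_symm_apply x

end Equiv.Perm

theorem stmt5 {X : Type*} (G : Subgroup (Equiv.Perm X)) (N : Subgroup G)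
    (hN : N.Normal) (g : G) (hg : g ∈ N) (h : G) (D : Set X)
    (hDg : Disjoint D ((g : Equiv.Perm X) '' D))
    (hDh : Disjoint D ((h : Equiv.Perm X) '' D))
    (hgh : Disjoint ((g : Equiv.Perm X) '' D) ((h : Equiv.Perm X) '' D)) :
    ∀ u v : G, {x : X | (u : Equiv.Perm X) x ≠ x} ⊆ D →
      {x : X | (v : Equiv.Perm X) x ≠ x} ⊆ D →
      u * v * u⁻¹ * v⁻¹ ∈ N := by
  intro u v hu hv
  have hcomm {a b : G} {A B : Set X} (hAB : Disjoint A B) (ha : {x | (a : Equiv.Perm X) x ≠ x} ⊆ A)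
      (hb : {x | (b : Equiv.Perm X) x ≠ x} ⊆ B) : Commute a b :=
    Commute.of_map (f := G.subtype) G.subtype_injective
      (Equiv.Perm.commute_of_disjoint_of_subset hAB ha hb)
  have hu' := Equiv.Perm.setOf_conj_apply_ne_subset_image hu g
  have hv' := Equiv.Perm.setOf_conj_apply_ne_subset_image hv h
  rw [← commutatorElement_def, ← commutatorElement_commutatorElement_eq_of_commute
    (g := g) (h := h) (hcomm hDg.symm hu' hv) (hcomm hgh hu' hv') (hcomm hDh hu hv')]
  exact hN.commutatorElement_commutatorElement_mem hg u _
end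

section
/- Let G be a group, ν : G → ℕ a conjugation-invariant, symmetric, subadditive norm, and let (g_i)_{i≥1} be a sequence of pairwise commuting elements of G whose product stabilizes in the following weak sense: for each i there is an element r_i ∈ G (the 'tail') with ν(r_i) ≤ 1 such that g = g_1 g_2 ⋯ g_i · r_i. If for each i one has ν(g_i) ≥ c_i + ν(g_{i-1} ⋯ g_1) + 1 for some real c_i ≥ 0, then ν(g) ≥ c_i for every i. -/
section SubadditiveNorm

variable {G : Type*} [Group G] {ν : G → ℕ}

theorem le_add_add_of_eq_mul_mul (hsymm : ∀ g : G, ν g⁻¹ = ν g)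
    (hsub : ∀ g h : G, ν (g * h) ≤ ν g + ν h) {p x r g : G} (h : g = p * x * r) :
    ν x ≤ ν p + ν g + ν r := by
  have hx : x = p⁻¹ * g * r⁻¹ := by rw [h]; group
  calc ν x = ν (p⁻¹ * g * r⁻¹) := by rw [hx]
    _ ≤ ν p⁻¹ + ν g + ν r⁻¹ := (hsub _ _).trans (Nat.add_le_add_right (hsub _ _) _)
    _ = ν p + ν g + ν r := by rw [hsymm, hsymm]

end SubadditiveNorm

theorem List.prod_map_range_succ {M : Type*} [Monoid M] (f : ℕ → M) (n : ℕ) :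
    ((List.range (n + 1)).map f).prod = ((List.range n).map f).prod * f n := by
  rw [List.range_succ, List.map_append, List.prod_append, List.map_singleton,
    List.prod_singleton]

theorem stmt17_general {G : Type*} [Group G] (ν : G → ℕ)
    (hsymm : ∀ g : G, ν g⁻¹ = ν g)
    (hsub : ∀ g h : G, ν (g * h) ≤ ν g + ν h)
    (g : G) (gseq : ℕ → G) (r : ℕ → G) (c : ℕ → ℝ)
    (htail : ∀ i : ℕ, g = ((List.range (i + 1)).map gseq).prod * r i ∧ ν (r i) ≤ 1)
    (hgrow : ∀ i : ℕ,
      (ν (gseq i) : ℝ) ≥ c i + (ν (((List.range i).map gseq).prod) : ℝ) + 1) :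
    ∀ i : ℕ, (ν g : ℝ) ≥ c i := by
  intro i
  obtain ⟨hg, hr⟩ := htail i
  rw [List.prod_map_range_succ] at hg
  have hbound : ν (gseq i) ≤ ν ((List.range i).map gseq).prod + ν g + 1 :=
    (le_add_add_of_eq_mul_mul hsymm hsub hg).trans (Nat.add_le_add_left hr _)
  have hbound' : (ν (gseq i) : ℝ) ≤ ν ((List.range i).map gseq).prod + ν g + 1 := by
    exact_mod_cast hbound
  linarith [hgrow i]

theorem stmt17 {G : Type*} [Group G] (ν : G → ℕ)
    (hconj : ∀ g h : G, ν (h * g * h⁻¹) = ν g)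
    (hsymm : ∀ g : G, ν g⁻¹ = ν g)
    (hsub : ∀ g h : G, ν (g * h) ≤ ν g + ν h)
    (g : G) (gseq : ℕ → G) (r : ℕ → G) (c : ℕ → ℝ)
    (hcomm : ∀ i j : ℕ, i ≠ j → Commute (gseq i) (gseq j))
    (hc : ∀ i, 0 ≤ c i)
    (htail : ∀ i : ℕ, g = ((List.range (i + 1)).map gseq).prod * r i ∧ ν (r i) ≤ 1)
    (hgrow : ∀ i : ℕ,
      (ν (gseq i) : ℝ) ≥ c i + (ν (((List.range i).map gseq).prod) : ℝ) + 1) :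
    ∀ i : ℕ, (ν g : ℝ) ≥ c i :=
  stmt17_general ν hsymm hsub g gseq r c htail hgrow
end
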